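/- Let E be a σ-Dedekind complete Banach lattice and (f_n) a disjoint weak*-null sequence in E*. Then the sequences (|f_n|), (f_n^+), and (f_n^-) all converge to 0 in the weak* topology. -/

import Mathlib

open Filter Topology

section Defs

variable {E : Type*} [NormedAddCommGroup E] [Lattice E] [IsOrderedAddMonoid E] [HasSolidNorm E] [NormedSpace ℝ E]

/-- The value of the modulus `|f|` of a functional at a positive element `x`:
`|f|(x) = sup { f y : |y| ≤ x }`. -/
noncomputable def absVal (f : E →L[ℝ] ℝ) (x : E) : ℝ :=
  sSup ((fun y => f y) '' {y | |y| ≤ x})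

/-- The value of the positive part `f⁺` of a functional at a positive element `x`:
`f⁺(x) = sup { f y : 0 ≤ y ≤ x }`. -/
noncomputable def posVal (f : E →L[ℝ] ℝ) (x : E) : ℝ :=
  sSup ((fun y => f y) '' {y | 0 ≤ y ∧ y ≤ x})

/-- The value of `|f|` at an arbitrary `x`, via `x = x⁺ - x⁻`. -/
noncomputable def absValF (f : E →L[ℝ] ℝ) (x : E) : ℝ :=
  absVal f (x ⊔ 0) - absVal f (-x ⊔ 0)

/-- The value of `f⁺` at an arbitrary `x`, via `x = x⁺ - x⁻`. -/
noncomputable def posValF (f : E →L[ℝ] ℝ) (x : E) : ℝ :=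
  posVal f (x ⊔ 0) - posVal f (-x ⊔ 0)

/-- The value of `f⁻ = (-f)⁺` at an arbitrary `x`. -/
noncomputable def negValF (f : E →L[ℝ] ℝ) (x : E) : ℝ :=
  posValF (-f) x

/-- `f ≤ g` in the dual order: `f x ≤ g x` for all `x ≥ 0`. -/
def FunLe (f g : E →L[ℝ] ℝ) : Prop := ∀ x : E, 0 ≤ x → f x ≤ g x

/-- `|f| ≤ |g|` in the dual order. -/
def FunAbsLe (f g : E →L[ℝ] ℝ) : Prop := ∀ x : E, 0 ≤ x → absVal f x ≤ absVal g x

/-- Disjointness of two functionals: `(|f| ∧ |g|)(x) = 0` for all `x ≥ 0`, where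
`(|f| ∧ |g|)(x) = inf { |f|(y) + |g|(x - y) : 0 ≤ y ≤ x }` (Riesz–Kantorovich). -/
def FunDisjoint (f g : E →L[ℝ] ℝ) : Prop :=
  ∀ x : E, 0 ≤ x →
    sInf ((fun y => absVal f y + absVal g (x - y)) '' {y | 0 ≤ y ∧ y ≤ x}) = 0

/-- A sequence of functionals is weak*-null. -/
def WeakStarNull (f : ℕ → E →L[ℝ] ℝ) : Prop :=
  ∀ x : E, Tendsto (fun n => f n x) atTop (𝓝 0)

/-- A sequence in `E` is weakly null. -/
def WeaklyNull (x : ℕ → E) : Prop :=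
  ∀ f : E →L[ℝ] ℝ, Tendsto (fun n => f (x n)) atTop (𝓝 0)

/-- A sequence of functionals is weakly null (i.e. null for `σ(E*, E**)`). -/
def WeaklyNullDual (f : ℕ → E →L[ℝ] ℝ) : Prop :=
  ∀ Φ : (E →L[ℝ] ℝ) →L[ℝ] ℝ, Tendsto (fun n => Φ (f n)) atTop (𝓝 0)

/-- Disjointness of two elements of a Banach lattice. -/
def ElemDisjoint (x y : E) : Prop := |x| ⊓ |y| = 0

/-- A set is almost limited: it is norm bounded and every disjoint weak*-null sequence of
functionals converges uniformly to zero on it. -/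
def AlmostLimited (A : Set E) : Prop :=
  Bornology.IsBounded A ∧
    ∀ f : ℕ → E →L[ℝ] ℝ, Pairwise (fun m n => FunDisjoint (f m) (f n)) → WeakStarNull f →
      ∀ ε > 0, ∀ᶠ n in atTop, ∀ x ∈ A, |f n x| < ε

/-- A set is limited: it is norm bounded and every weak*-null sequence of functionals
converges uniformly to zero on it. -/
def LimitedSet (A : Set E) : Prop :=
  Bornology.IsBounded A ∧
    ∀ f : ℕ → E →L[ℝ] ℝ, WeakStarNull f →
      ∀ ε > 0, ∀ᶠ n in atTop, ∀ x ∈ A, |f n x| < ε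

/-- A set is almost Dunford–Pettis: it is norm bounded and every disjoint weakly null
sequence of functionals converges uniformly to zero on it. -/
def AlmostDPSet (A : Set E) : Prop :=
  Bornology.IsBounded A ∧
    ∀ f : ℕ → E →L[ℝ] ℝ, Pairwise (fun m n => FunDisjoint (f m) (f n)) → WeaklyNullDual f →
      ∀ ε > 0, ∀ᶠ n in atTop, ∀ x ∈ A, |f n x| < ε

/-- The solid hull of a set. -/
def SolidHull (A : Set E) : Set E := {y | ∃ x ∈ A, |y| ≤ |x|}

/-- A set is L-weakly compact: norm bounded, and every disjoint sequence in its solid hull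
is norm null. -/
def LWeaklyCompact (A : Set E) : Prop :=
  Bornology.IsBounded A ∧
    ∀ x : ℕ → E, (∀ n, x n ∈ SolidHull A) → Pairwise (fun m n => ElemDisjoint (x m) (x n)) →
      Tendsto (fun n => ‖x n‖) atTop (𝓝 0)

/-- A set `B ⊆ E*` is an almost L-set: norm bounded, and every disjoint weakly null sequence
of `E` converges uniformly to zero on `B`. -/
def AlmostLSet (B : Set (E →L[ℝ] ℝ)) : Prop :=
  Bornology.IsBounded B ∧
    ∀ x : ℕ → E, Pairwise (fun m n => ElemDisjoint (x m) (x n)) → WeaklyNull x →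
      ∀ ε > 0, ∀ᶠ n in atTop, ∀ f ∈ B, |f (x n)| < ε

/-- The solid hull of a set of functionals, using the dual order. -/
def DualSolidHull (B : Set (E →L[ℝ] ℝ)) : Set (E →L[ℝ] ℝ) :=
  {g | ∃ f ∈ B, FunAbsLe g f}

/-- A set `B ⊆ E*` is L-weakly compact: norm bounded, and every disjoint sequence in its
solid hull is norm null. -/
def DualLWeaklyCompact (B : Set (E →L[ℝ] ℝ)) : Prop :=
  Bornology.IsBounded B ∧
    ∀ g : ℕ → E →L[ℝ] ℝ, (∀ n, g n ∈ DualSolidHull B) →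
      Pairwise (fun m n => FunDisjoint (g m) (g n)) →
        Tendsto (fun n => ‖g n‖) atTop (𝓝 0)

end Defs

/-- A Banach lattice is σ-Dedekind complete: every (countable) sequence bounded above has a
supremum. -/
def SigmaDedekindComplete (E : Type*) [NormedAddCommGroup E] [Lattice E] [IsOrderedAddMonoid E] [HasSolidNorm E] : Prop :=
  ∀ s : ℕ → E, (∃ b, ∀ n, s n ≤ b) → ∃ a, IsLUB (Set.range s) a

/-- The norm of `E` is order continuous: if a downward directed set has infimum `0`, then it
contains elements of arbitrarily small norm. -/
def OrderContinuousNorm (E : Type*) [NormedAddCommGroup E] [Lattice E] [IsOrderedAddMonoid E] [HasSolidNorm E] : Prop :=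
  ∀ A : Set E, A.Nonempty → DirectedOn (· ≥ ·) A → IsGLB A 0 →
    ∀ ε > 0, ∃ a ∈ A, ‖a‖ < ε

/-- The norm of `E*` is order continuous (with the dual order spelled out): if a nonempty
family of functionals is downward directed, consists of positive functionals, and `0` is its
greatest lower bound, then it contains functionals of arbitrarily small norm. -/
def DualOrderContinuousNorm (E : Type*) [NormedAddCommGroup E] [Lattice E] [IsOrderedAddMonoid E] [HasSolidNorm E] [NormedSpace ℝ E] :
    Prop :=
  ∀ A : Set (E →L[ℝ] ℝ), A.Nonempty →
    (∀ f ∈ A, ∀ g ∈ A, ∃ h ∈ A, FunLe h f ∧ FunLe h g) →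
    (∀ f ∈ A, FunLe 0 f) →
    (∀ g, (∀ f ∈ A, FunLe g f) → FunLe g 0) →
    ∀ ε > 0, ∃ f ∈ A, ‖f‖ < ε

/-- `E` has the weak Dunford–Pettis* property: `f n (x n) → 0` for every weakly null
sequence `(x n)` in `E` and every disjoint weak*-null sequence `(f n)` in `E*`. -/
def WDPStar (E : Type*) [NormedAddCommGroup E] [Lattice E] [IsOrderedAddMonoid E] [HasSolidNorm E] [NormedSpace ℝ E] : Prop :=
  ∀ (x : ℕ → E) (f : ℕ → E →L[ℝ] ℝ), WeaklyNull x →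
    Pairwise (fun m n => FunDisjoint (f m) (f n)) → WeakStarNull f →
      Tendsto (fun n => f n (x n)) atTop (𝓝 0)

/-- `E` has the positive Schur property: every weakly null sequence of positive elements is
norm null. -/
def PositiveSchur (E : Type*) [NormedAddCommGroup E] [Lattice E] [IsOrderedAddMonoid E] [HasSolidNorm E] [NormedSpace ℝ E] : Prop :=
  ∀ x : ℕ → E, (∀ n, 0 ≤ x n) → WeaklyNull x → Tendsto (fun n => ‖x n‖) atTop (𝓝 0)

/-- A set is relatively weakly compact if the weak closure of its image in the weak space is
compact. -/
def RelWeaklyCompact {E : Type*} [NormedAddCommGroup E] [Lattice E] [IsOrderedAddMonoid E] [HasSolidNorm E] [NormedSpace ℝ E]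
    (W : Set E) : Prop :=
  IsCompact (closure ((toWeakSpace ℝ E) '' W))


/-!
Fix `v ≥ 0` and suppose that `|f n|(v) ≥ ε` along a subsequence. Since `|f m| ⊓ |f j| = 0`,
`v` splits into a component carrying almost all of `|f j|(v)` and one carrying almost all of
`|f m|(v)`; σ-Dedekind completeness is what turns an approximate splitting into a component.
Intersecting these components over `m` gives, for each `j`, a decreasing chain of components of
`v`. Either along some chain other functionals keep a fixed mass, which then escapes to ever later
indices and leaves disjoint "humps" `b i ≤ v` with `|f (n i)|(b i) ≥ δ` in the successive
differences of the chain; or every `f j` lives on a component that all other functionals barely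
see, and disjointifying these components gives humps with `n i = i`.

Humps contradict weak*-nullity: pick `|y i| ≤ b i` with `f (n i) (y i) ≥ δ / 2`. By σ-Dedekind
completeness `A ↦ ∑_{i ∈ A} y i` is a finitely additive `E`-valued set function on `ℕ`, and
Rosenthal's lemma provides a subsequence on which the off-diagonal terms are small. With `A` the
range of that subsequence, all its functionals stay above `δ / 4` at the single element
`∑_{i ∈ A} y i`.

The statements for `f⁺` and `f⁻` follow from `0 ≤ f⁺, f⁻ ≤ |f|`.
-/

section LatticeZero

variable {α : Type*} [Lattice α] [Zero α]

lemma pairwise_inf_eq_zero_of_lt {w : ℕ → α} (h : ∀ i j, i < j → w i ⊓ w j = 0) :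
    Pairwise fun i j => w i ⊓ w j = 0 :=
  haveI : Std.Symm fun i j => w i ⊓ w j = 0 := ⟨fun i j hij => by rwa [inf_comm]⟩
  Pairwise.of_lt h

lemma inf_eq_zero_of_le_of_le {a b c d : α} (ha : 0 ≤ a) (hb : 0 ≤ b) (hac : a ≤ c) (hbd : b ≤ d)
    (hcd : c ⊓ d = 0) : a ⊓ b = 0 :=
  le_antisymm (hcd ▸ inf_le_inf hac hbd) (le_inf ha hb)

end LatticeZero

section ChainInf

variable {α : Type*} [SemilatticeInf α] {x : α} {c : ℕ → α}

def chainInf (x : α) (c : ℕ → α) : ℕ → α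
  | 0 => x
  | k + 1 => chainInf x c k ⊓ c k

lemma antitone_chainInf : Antitone (chainInf x c) :=
  antitone_nat_of_succ_le fun _ => inf_le_left

lemma chainInf_le {m k : ℕ} (h : m < k) : chainInf x c k ≤ c m :=
  (antitone_chainInf h).trans inf_le_right

lemma chainInf_le_self (k : ℕ) : chainInf x c k ≤ x :=
  antitone_chainInf (Nat.zero_le k)

end ChainInf

section LatticeGroup

variable {α : Type*} [AddCommGroup α] [Lattice α] [IsOrderedAddMonoid α]

lemma inf_add_le_inf_add_inf {u a b : α} (hu : 0 ≤ u) (ha : 0 ≤ a) (hb : 0 ≤ b) :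
    u ⊓ (a + b) ≤ u ⊓ a + u ⊓ b := by
  have h₁ : u ⊓ (a + b) ≤ u ⊓ a + b := by
    simpa [inf_add] using inf_le_inf_right (a + b) (le_add_of_nonneg_right hb : u ≤ u + b)
  have h₂ : u ⊓ (a + b) - u ⊓ a ≤ u :=
    (sub_le_self _ (le_inf hu ha)).trans inf_le_left
  rw [← sub_le_iff_le_add']
  exact le_inf h₂ (sub_le_iff_le_add'.2 h₁)

lemma add_eq_sup_of_inf_eq_zero {a b : α} (h : a ⊓ b = 0) : a + b = a ⊔ b := by
  rw [← inf_add_sup a b, h, zero_add]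

lemma sup_le_add_of_nonneg {a b : α} (ha : 0 ≤ a) (hb : 0 ≤ b) : a ⊔ b ≤ a + b :=
  sup_le (le_add_of_nonneg_right hb) (le_add_of_nonneg_left ha)

lemma inf_nsmul_le_nsmul_inf {a b : α} (ha : 0 ≤ a) (hb : 0 ≤ b) (k : ℕ) :
    a ⊓ k • b ≤ k • (a ⊓ b) := by
  induction k with
  | zero => simp
  | succ k ih =>
    calc a ⊓ (k + 1) • b ≤ a ⊓ k • b + a ⊓ b := by
          rw [succ_nsmul]; exact inf_add_le_inf_add_inf ha (nsmul_nonneg hb k) hb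
      _ ≤ (k + 1) • (a ⊓ b) := by rw [succ_nsmul]; exact add_le_add_left ih _

lemma inf_eq_zero_of_le_nsmul {a b h : α} (ha : 0 ≤ a) (hb : 0 ≤ b) (hh : 0 ≤ h)
    (hab : ∃ k : ℕ, a ≤ k • b) (hbh : b ⊓ h = 0) : a ⊓ h = 0 := by
  obtain ⟨k, hk⟩ := hab
  refine le_antisymm ?_ (le_inf ha hh)
  calc a ⊓ h ≤ h ⊓ k • b := by rw [inf_comm]; exact inf_le_inf_left h hk
    _ ≤ k • (h ⊓ b) := inf_nsmul_le_nsmul_inf hh hb k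
    _ = 0 := by rw [inf_comm, hbh, nsmul_zero]

lemma IsLUB.inf_eq_zero {a : ℕ → α} {p h : α} (hp : IsLUB (Set.range a) p) (hh : 0 ≤ h)
    (ha : ∀ k, 0 ≤ a k) (hah : ∀ k, a k ⊓ h = 0) : p ⊓ h = 0 := by
  have hp₀ : 0 ≤ p := (ha 0).trans (hp.1 ⟨0, rfl⟩)
  have hd₀ : 0 ≤ p ⊓ h := le_inf hp₀ hh
  have hle : p ≤ p - p ⊓ h := hp.2 <| by
    rintro _ ⟨k, rfl⟩
    have hk : a k ⊓ (p ⊓ h) = 0 :=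
      le_antisymm ((inf_le_inf_left _ inf_le_right).trans (hah k).le) (le_inf (ha k) hd₀)
    rw [le_sub_iff_add_le, add_eq_sup_of_inf_eq_zero hk]
    exact sup_le (hp.1 ⟨k, rfl⟩) inf_le_left
  exact le_antisymm (by simpa using hle) hd₀

lemma isLUB_range_add {a b : ℕ → α} {p q : α} (ha : Monotone a) (hb : Monotone b)
    (hp : IsLUB (Set.range a) p) (hq : IsLUB (Set.range b) q) :
    IsLUB (Set.range (a + b)) (p + q) := by
  refine ⟨?_, fun c hc => ?_⟩
  · rintro _ ⟨n, rfl⟩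
    exact add_le_add (hp.1 ⟨n, rfl⟩) (hq.1 ⟨n, rfl⟩)
  · have hab : ∀ n m, a n + b m ≤ c := fun n m =>
      (add_le_add (ha (le_max_left n m)) (hb (le_max_right n m))).trans (hc ⟨max n m, rfl⟩)
    have hpc : p ≤ c - q := hp.2 <| by
      rintro _ ⟨n, rfl⟩
      refine le_sub_comm.1 (hq.2 ?_)
      rintro _ ⟨m, rfl⟩
      exact le_sub_iff_add_le'.2 (hab n m)
    exact le_sub_iff_add_le.1 hpc

/-- Riesz decomposition. -/
lemma exists_add_eq_of_abs_le_add {y a b : α} (ha : 0 ≤ a) (hb : 0 ≤ b) (h : |y| ≤ a + b) :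
    ∃ y₁ y₂, y = y₁ + y₂ ∧ |y₁| ≤ a ∧ |y₂| ≤ b := by
  refine ⟨(y ⊔ -a) ⊓ a, y - ((y ⊔ -a) ⊓ a), by abel, ?_, ?_⟩
  · refine abs_le'.2 ⟨inf_le_right, ?_⟩
    rw [neg_le]
    exact le_inf le_sup_right ((neg_nonpos.2 ha).trans ha)
  · have hy : y - ((y ⊔ -a) ⊓ a) = 0 ⊓ (y + a) ⊔ (y - a) := by
      rw [sub_inf, sub_sup, sub_self, sub_neg_eq_add]
    rw [hy]
    refine abs_le'.2 ⟨sup_le (inf_le_left.trans hb) ?_, ?_⟩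
    · exact sub_le_iff_le_add'.2 ((le_abs_self y).trans h)
    · rw [neg_sup, neg_inf, neg_zero]
      refine inf_le_of_left_le (sup_le hb ?_)
      rw [neg_add', sub_le_iff_le_add']
      exact (neg_le_abs y).trans h

lemma sum_inf_eq_zero_of_pairwise {ι : Type*} [DecidableEq ι] {e : ι → α} (he : ∀ i, 0 ≤ e i)
    (hd : Pairwise fun i j => e i ⊓ e j = 0) {F : Finset ι} {j : ι} (hj : j ∉ F) :
    (∑ i ∈ F, e i) ⊓ e j = 0 := by
  induction F using Finset.induction_on with
  | empty => simpa using inf_eq_left.2 (he j)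
  | insert i F hi ih =>
    rw [Finset.mem_insert, not_or] at hj
    refine le_antisymm ?_ (le_inf (Finset.sum_nonneg fun i _ => he i) (he j))
    rw [Finset.sum_insert hi, inf_comm]
    calc e j ⊓ (e i + ∑ k ∈ F, e k) ≤ e j ⊓ e i + e j ⊓ ∑ k ∈ F, e k :=
          inf_add_le_inf_add_inf (he j) (he i) (Finset.sum_nonneg fun k _ => he k)
      _ = 0 := by rw [hd hj.1, inf_comm, ih hj.2, add_zero]

lemma sum_le_of_pairwise_inf_eq_zero {ι : Type*} {e : ι → α} {x : α} (hx : 0 ≤ x)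
    (he : ∀ i, 0 ≤ e i) (hex : ∀ i, e i ≤ x) (hd : Pairwise fun i j => e i ⊓ e j = 0)
    (F : Finset ι) : ∑ i ∈ F, e i ≤ x := by
  classical
  induction F using Finset.induction_on with
  | empty => simpa using hx
  | insert i F hi ih =>
    rw [Finset.sum_insert hi, add_eq_sup_of_inf_eq_zero]
    · exact sup_le (hex i) ih
    · rw [inf_comm]; exact sum_inf_eq_zero_of_pairwise he hd hi

end LatticeGroup

section Components

variable {α : Type*} [AddCommGroup α] [Lattice α] {x c d : α}

/-- Disjointness of `c` and `x - c` already forces `0 ≤ c ≤ x`. -/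
def IsComponent (x c : α) : Prop := c ⊓ (x - c) = 0

lemma isComponent_self (hx : 0 ≤ x) : IsComponent x x := by
  rw [IsComponent, sub_self, inf_eq_right.2 hx]

namespace IsComponent

lemma nonneg (h : IsComponent x c) : 0 ≤ c := h ▸ inf_le_left

lemma sub_nonneg (h : IsComponent x c) : 0 ≤ x - c := h ▸ inf_le_right

lemma sub (h : IsComponent x c) : IsComponent x (x - c) := by
  rw [IsComponent, sub_sub_cancel, inf_comm]; exact h

variable [IsOrderedAddMonoid α]

lemma le (h : IsComponent x c) : c ≤ x := _root_.sub_nonneg.1 h.sub_nonneg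

lemma inf (hc : IsComponent x c) (hd : IsComponent x d) : IsComponent x (c ⊓ d) := by
  have h₀ : 0 ≤ c ⊓ d := le_inf hc.nonneg hd.nonneg
  refine le_antisymm ?_ (le_inf h₀ (_root_.sub_nonneg.2 (inf_le_left.trans hc.le)))
  calc c ⊓ d ⊓ (x - c ⊓ d) ≤ c ⊓ d ⊓ ((x - c) + (x - d)) := by
        rw [sub_inf]; exact inf_le_inf_left _ (sup_le_add_of_nonneg hc.sub_nonneg hd.sub_nonneg)
    _ ≤ c ⊓ d ⊓ (x - c) + c ⊓ d ⊓ (x - d) :=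
        inf_add_le_inf_add_inf h₀ hc.sub_nonneg hd.sub_nonneg
    _ ≤ c ⊓ (x - c) + d ⊓ (x - d) :=
        add_le_add (inf_le_inf_right _ inf_le_left) (inf_le_inf_right _ inf_le_right)
    _ = 0 := by rw [hc, hd, add_zero]

end IsComponent

variable [IsOrderedAddMonoid α] {c : ℕ → α}

lemma isComponent_chainInf (hx : 0 ≤ x) (hc : ∀ m, IsComponent x (c m)) (k : ℕ) :
    IsComponent x (chainInf x c k) := by
  induction k with
  | zero => exact isComponent_self hx
  | succ k ih => exact ih.inf (hc k)

lemma sub_chainInf_le_sum (hc : ∀ m, c m ≤ x) (k : ℕ) :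
    x - chainInf x c k ≤ ∑ m ∈ Finset.range k, (x - c m) := by
  induction k with
  | zero => simp [chainInf]
  | succ k ih =>
    rw [chainInf, sub_inf, Finset.sum_range_succ]
    exact (sup_le_add_of_nonneg (sub_nonneg.2 (chainInf_le_self k))
      (sub_nonneg.2 (hc k))).trans (add_le_add_left ih _)

lemma pairwise_sub_succ_inf_eq_zero {d : ℕ → α} (hd : ∀ k, IsComponent x (d k))
    (hanti : Antitone d) :
    Pairwise fun i j => (d i - d (i + 1)) ⊓ (d j - d (j + 1)) = 0 := by
  refine pairwise_inf_eq_zero_of_lt fun i j hij => ?_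
  have hle : ∀ k, d (k + 1) ≤ d k := fun k => hanti (Nat.le_succ k)
  refine inf_eq_zero_of_le_of_le (sub_nonneg.2 (hle i)) (sub_nonneg.2 (hle j))
    (sub_le_sub_right (hd i).le _) ((sub_le_self _ (hd (j + 1)).nonneg).trans (hanti hij))
    (?_ : (x - d (i + 1)) ⊓ d (i + 1) = 0)
  rw [inf_comm]; exact hd (i + 1)

lemma exists_pairwise_inf_eq_zero_isComponent (hx : 0 ≤ x) {H : ℕ → α}
    (hH : ∀ j, IsComponent x (H j)) :
    ∃ w : ℕ → α, (∀ j, IsComponent x (w j)) ∧ (Pairwise fun i j => w i ⊓ w j = 0) ∧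
      ∀ j, x - w j ≤ (x - H j) + ∑ i ∈ Finset.range j, H i := by
  set r := chainInf x (fun i => x - H i)
  have hr : ∀ j, IsComponent x (r j) := isComponent_chainInf hx fun i => (hH i).sub
  refine ⟨fun j => H j ⊓ r j, fun j => (hH j).inf (hr j), ?_, fun j => ?_⟩
  · refine pairwise_inf_eq_zero_of_lt fun i j hij => ?_
    exact inf_eq_zero_of_le_of_le ((hH i).inf (hr i)).nonneg ((hH j).inf (hr j)).nonneg
      inf_le_left (inf_le_right.trans (chainInf_le hij)) (hH i)
  · have hsum := sub_chainInf_le_sum (x := x) (fun i => sub_le_self x (hH i).nonneg) j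
    simp only [sub_sub_cancel] at hsum
    rw [sub_inf]
    exact (sup_le_add_of_nonneg (hH j).sub_nonneg (hr j).sub_nonneg).trans
      (add_le_add le_rfl hsum)

end Components

section AbsVal

variable {E : Type*} [NormedAddCommGroup E] [Lattice E] [NormedSpace ℝ E] (f : E →L[ℝ] ℝ)
  {u v y : E}

lemma absVal_neg (v : E) : absVal (-f) v = absVal f v := by
  have key : ∀ g : E →L[ℝ] ℝ,
      (fun y => (-g) y) '' {y | |y| ≤ v} ⊆ (fun y => g y) '' {y | |y| ≤ v} := by
    rintro g _ ⟨y, hy, rfl⟩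
    exact ⟨-y, by simpa using hy, by simp⟩
  exact congrArg sSup (subset_antisymm (key f) (by simpa using key (-f)))

lemma nonempty_image_abs_le [IsOrderedAddMonoid E] (hv : 0 ≤ v) :
    ((fun y => f y) '' {y | |y| ≤ v}).Nonempty :=
  ⟨f 0, 0, by simpa using hv, rfl⟩

lemma absVal_le [IsOrderedAddMonoid E] (hv : 0 ≤ v) {c : ℝ} (h : ∀ y, |y| ≤ v → f y ≤ c) :
    absVal f v ≤ c :=
  csSup_le (nonempty_image_abs_le f hv) (by rintro _ ⟨y, hy, rfl⟩; exact h y hy)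

lemma exists_lt_apply_of_lt_absVal [IsOrderedAddMonoid E] (hv : 0 ≤ v) {c : ℝ}
    (h : c < absVal f v) :
    ∃ y, |y| ≤ v ∧ c < f y := by
  obtain ⟨_, ⟨y, hy, rfl⟩, hc⟩ := exists_lt_of_lt_csSup (nonempty_image_abs_le f hv) h
  exact ⟨y, hy, hc⟩

lemma image_posVal_subset [IsOrderedAddMonoid E] (v : E) :
    (fun y => f y) '' {y | 0 ≤ y ∧ y ≤ v} ⊆ (fun y => f y) '' {y | |y| ≤ v} := by
  rintro _ ⟨y, ⟨hy₀, hyv⟩, rfl⟩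
  exact ⟨y, by rwa [Set.mem_ofPred_eq, abs_of_nonneg hy₀], rfl⟩

variable [HasSolidNorm E]

lemma apply_le_norm_mul_norm (h : |y| ≤ v) : f y ≤ ‖f‖ * ‖v‖ :=
  (le_abs_self _).trans <| (f.le_opNorm y).trans <|
    mul_le_mul_of_nonneg_left (HasSolidNorm.solid (h.trans (le_abs_self v))) (norm_nonneg f)

lemma bddAbove_image_abs_le (v : E) : BddAbove ((fun y => f y) '' {y | |y| ≤ v}) :=
  ⟨‖f‖ * ‖v‖, by rintro _ ⟨y, hy, rfl⟩; exact apply_le_norm_mul_norm f hy⟩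

lemma le_absVal (h : |y| ≤ v) : f y ≤ absVal f v :=
  le_csSup (bddAbove_image_abs_le f v) ⟨y, h, rfl⟩

lemma abs_apply_le_absVal (h : |y| ≤ v) : |f y| ≤ absVal f v :=
  abs_le.2 ⟨neg_le.1 (by simpa using le_absVal f (y := -y) (by simpa using h)), le_absVal f h⟩

variable [IsOrderedAddMonoid E]

lemma absVal_nonneg (hv : 0 ≤ v) : 0 ≤ absVal f v := by
  simpa using le_absVal f (y := 0) (by simpa using hv)

lemma absVal_le_norm_mul_norm (hv : 0 ≤ v) : absVal f v ≤ ‖f‖ * ‖v‖ :=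
  absVal_le f hv fun _ hy => apply_le_norm_mul_norm f hy

lemma absVal_mono (hu : 0 ≤ u) (h : u ≤ v) : absVal f u ≤ absVal f v :=
  absVal_le f hu fun _ hy => le_absVal f (hy.trans h)

lemma absVal_zero : absVal f (0 : E) = 0 :=
  le_antisymm (absVal_le f le_rfl fun y hy => by
    rw [le_antisymm ((le_abs_self y).trans hy) (neg_nonpos.1 ((neg_le_abs y).trans hy)), map_zero])
    (absVal_nonneg f le_rfl)

lemma absVal_add {a b : E} (ha : 0 ≤ a) (hb : 0 ≤ b) :
    absVal f (a + b) = absVal f a + absVal f b := by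
  refine le_antisymm (absVal_le f (add_nonneg ha hb) fun y hy => ?_) ?_
  · obtain ⟨y₁, y₂, rfl, h₁, h₂⟩ := exists_add_eq_of_abs_le_add ha hb hy
    rw [map_add]
    exact add_le_add (le_absVal f h₁) (le_absVal f h₂)
  · rw [← le_sub_iff_add_le]
    refine absVal_le f ha fun y₁ h₁ => ?_
    rw [le_sub_comm]
    refine absVal_le f hb fun y₂ h₂ => ?_
    rw [le_sub_iff_add_le', ← map_add]
    exact le_absVal f ((abs_add_le y₁ y₂).trans (add_le_add h₁ h₂))

lemma absVal_two_nsmul {a : E} (ha : 0 ≤ a) : absVal f (2 • a) = 2 * absVal f a := by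
  rw [two_nsmul, absVal_add f ha ha, two_mul]

lemma absVal_sub (hu : 0 ≤ u) (huv : u ≤ v) :
    absVal f (v - u) = absVal f v - absVal f u := by
  rw [eq_sub_iff_add_eq, ← absVal_add f (sub_nonneg.2 huv) hu, sub_add_cancel]

lemma absVal_sum {ι : Type*} {e : ι → E} (he : ∀ i, 0 ≤ e i) (F : Finset ι) :
    absVal f (∑ i ∈ F, e i) = ∑ i ∈ F, absVal f (e i) := by
  classical
  induction F using Finset.induction_on with
  | empty => simpa using absVal_zero f
  | insert i F hi ih =>
    rw [Finset.sum_insert hi, Finset.sum_insert hi,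
      absVal_add f (he i) (Finset.sum_nonneg fun k _ => he k), ih]

lemma posVal_nonneg (hv : 0 ≤ v) : 0 ≤ posVal f v := by
  unfold posVal
  simpa using le_csSup ((bddAbove_image_abs_le f v).mono (image_posVal_subset f v))
    ⟨0, ⟨le_rfl, hv⟩, rfl⟩

lemma posVal_le_absVal (hv : 0 ≤ v) : posVal f v ≤ absVal f v :=
  csSup_le_csSup (bddAbove_image_abs_le f v) ⟨f 0, 0, ⟨le_rfl, hv⟩, rfl⟩
    (image_posVal_subset f v)

lemma tendsto_posVal_of_tendsto_absVal {g : ℕ → E →L[ℝ] ℝ}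
    (hv : 0 ≤ v) (h : Tendsto (fun n => absVal (g n) v) atTop (𝓝 0)) :
    Tendsto (fun n => posVal (g n) v) atTop (𝓝 0) :=
  squeeze_zero (fun _ => posVal_nonneg _ hv) (fun _ => posVal_le_absVal _ hv) h

end AbsVal

section BandProjection

variable {α : Type*} [AddCommGroup α] [Lattice α] [IsOrderedAddMonoid α]

/-- The supremum of `k • g ⊓ x` is the projection of `x` onto the band generated by `g`. -/
lemma isComponent_of_isLUB_nsmul_inf {x g p : α} (hx : 0 ≤ x) (hg : 0 ≤ g)
    (hp : IsLUB (Set.range fun k : ℕ => k • g ⊓ x) p) : IsComponent x p := by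
  have ha : ∀ k : ℕ, 0 ≤ k • g ⊓ x := fun k => le_inf (nsmul_nonneg hg k) hx
  have hpx : p ≤ x := hp.2 (by rintro _ ⟨k, rfl⟩; exact inf_le_right)
  have hxp : 0 ≤ x - p := sub_nonneg.2 hpx
  have hdisj : (x - p) ⊓ g = 0 := by
    set d := (x - p) ⊓ g
    have hd : 0 ≤ d := le_inf hxp hg
    have hle : p ≤ p - d := hp.2 <| by
      rintro _ ⟨k, rfl⟩
      refine le_sub_iff_add_le.2 (le_trans (le_inf ?_ ?_) (hp.1 ⟨k + 1, rfl⟩))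
      · rw [succ_nsmul]; exact add_le_add inf_le_left inf_le_right
      · calc k • g ⊓ x + d ≤ p + (x - p) := add_le_add (hp.1 ⟨k, rfl⟩) inf_le_left
          _ = x := add_sub_cancel p x
    exact le_antisymm (by simpa using hle) hd
  exact hp.inf_eq_zero hxp ha fun k =>
    inf_eq_zero_of_le_nsmul (ha k) hg hxp ⟨k, inf_le_left⟩ (by rw [inf_comm]; exact hdisj)

end BandProjection

section SigmaDedekindComplete

variable {E : Type*} [NormedAddCommGroup E] [Lattice E] [IsOrderedAddMonoid E] [HasSolidNorm E]

/-- The component is the complement of the projection of `x` onto the band generated by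
`(x - 2 • s)⁺`. -/
lemma exists_isComponent_le_two_nsmul (hσ : SigmaDedekindComplete E) {x s : E} (hs : 0 ≤ s)
    (hsx : s ≤ x) : ∃ c, IsComponent x c ∧ c ≤ 2 • s ∧ x - c ≤ 2 • (x - s) := by
  have hx : 0 ≤ x := hs.trans hsx
  set g := (x - 2 • s)⁺
  have hg : 0 ≤ g := posPart_nonneg _
  have hgx : g ≤ x := sup_le (sub_le_self _ (nsmul_nonneg hs 2)) hx
  obtain ⟨p, hp⟩ := hσ (fun k : ℕ => k • g ⊓ x) ⟨x, fun k => inf_le_right⟩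
  have hpc : IsComponent x p := isComponent_of_isLUB_nsmul_inf hx hg hp
  refine ⟨x - p, hpc.sub, ?_, ?_⟩
  · have hgp : g ≤ p := by simpa [inf_eq_left.2 hgx] using hp.1 ⟨1, rfl⟩
    calc x - p ≤ x - g := sub_le_sub_left hgp x
      _ ≤ x - (x - 2 • s) := sub_le_sub_left (le_posPart _) x
      _ = 2 • s := sub_sub_cancel x _
  · set h := (x - 2 • s)⁻
    have hh : 0 ≤ h := negPart_nonneg _
    have hph : p ⊓ h = 0 := hp.inf_eq_zero hh (fun k => le_inf (nsmul_nonneg hg k) hx) fun k =>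
      inf_eq_zero_of_le_nsmul (le_inf (nsmul_nonneg hg k) hx) hg hh ⟨k, inf_le_left⟩
        (posPart_inf_negPart_eq_zero _)
    have hhx : h ≤ x := by
      refine sup_le ?_ hx
      rw [neg_sub, sub_le_iff_le_add, two_nsmul]
      exact add_le_add hsx hsx
    have hpx : p + h ≤ x := by
      rw [add_eq_sup_of_inf_eq_zero hph]; exact sup_le hpc.le hhx
    calc x - (x - p) = p := sub_sub_cancel x p
      _ ≤ x - h := le_sub_iff_add_le.2 hpx
      _ ≤ x - -(x - 2 • s) := sub_le_sub_left (neg_le_negPart _) x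
      _ = 2 • (x - s) := by rw [two_nsmul, two_nsmul]; abel

lemma exists_additive_sum_of_pairwise_inf_eq_zero (hσ : SigmaDedekindComplete E) {v : E}
    (hv : 0 ≤ v) {w : ℕ → E} (hw : ∀ i, 0 ≤ w i) (hwv : ∀ i, w i ≤ v)
    (hwd : Pairwise fun i j => w i ⊓ w j = 0) :
    ∃ S : Set ℕ → E, (∀ A B, Disjoint A B → S (A ∪ B) = S A + S B) ∧ (∀ i, S {i} = w i) ∧
      ∀ A, 0 ≤ S A ∧ S A ≤ v := by
  set t : Set ℕ → ℕ → E := fun A N => ∑ i ∈ Finset.range N, A.indicator w i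
  have hsingle : ∀ i N, t {i} N = if i < N then w i else 0 := by
    intro i N; simp [t, Set.indicator_apply, Finset.sum_ite_eq']
  have hind : ∀ (A : Set ℕ) i, 0 ≤ A.indicator w i := fun A i =>
    Set.indicator_nonneg (fun i _ => hw i) i
  have hindw : ∀ (A : Set ℕ) i, A.indicator w i ≤ w i := fun A =>
    Set.indicator_le_self' fun i _ => hw i
  have hmono : ∀ A, Monotone (t A) := fun A N M hNM =>
    Finset.sum_le_sum_of_subset_of_nonneg (Finset.range_subset_range.2 hNM) fun i _ _ => hind A i
  have htv : ∀ A N, t A N ≤ v := fun A N => sum_le_of_pairwise_inf_eq_zero hv (hind A)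
    (fun i => (hindw A i).trans (hwv i)) (fun i j hij =>
      inf_eq_zero_of_le_of_le (hind A i) (hind A j) (hindw A i) (hindw A j) (hwd hij)) _
  choose S hS using fun A => hσ (t A) ⟨v, htv A⟩
  refine ⟨S, fun A B hAB => (hS _).unique ?_, fun i => (hS _).unique ?_, fun A => ⟨?_, ?_⟩⟩
  · have : t (A ∪ B) = t A + t B := by
      ext N
      simp only [t, Set.indicator_union_of_disjoint hAB, Finset.sum_add_distrib, Pi.add_apply]
    rw [this]
    exact isLUB_range_add (hmono A) (hmono B) (hS A) (hS B)
  · refine IsGreatest.isLUB ⟨⟨i + 1, by simp [hsingle]⟩, ?_⟩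
    rintro _ ⟨N, rfl⟩
    rw [hsingle]
    split_ifs
    exacts [le_rfl, hw i]
  · simpa [t] using (hS A).1 ⟨0, rfl⟩
  · exact (hS A).2 (by rintro _ ⟨N, rfl⟩; exact htv A N)

lemma exists_additive_sum_of_abs_le (hσ : SigmaDedekindComplete E) {v : E} (hv : 0 ≤ v)
    {b y : ℕ → E} (hbv : ∀ i, b i ≤ v) (hbd : Pairwise fun i j => b i ⊓ b j = 0)
    (hy : ∀ i, |y i| ≤ b i) :
    ∃ z : Set ℕ → E, (∀ A B, Disjoint A B → z (A ∪ B) = z A + z B) ∧ (∀ i, z {i} = y i) ∧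
      ∀ A, |z A| ≤ v := by
  have hpart : ∀ w : ℕ → E, (∀ i, 0 ≤ w i) → (∀ i, w i ≤ |y i|) → ∃ S : Set ℕ → E,
      (∀ A B, Disjoint A B → S (A ∪ B) = S A + S B) ∧ (∀ i, S {i} = w i) ∧
        ∀ A, 0 ≤ S A ∧ S A ≤ v := fun w hw hwy =>
    exists_additive_sum_of_pairwise_inf_eq_zero hσ hv hw
      (fun i => ((hwy i).trans (hy i)).trans (hbv i))
      fun i j hij => inf_eq_zero_of_le_of_le (hw i) (hw j) ((hwy i).trans (hy i))
        ((hwy j).trans (hy j)) (hbd hij)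
  obtain ⟨P, hPadd, hPi, hP⟩ := hpart (fun i => (y i)⁺) (fun i => posPart_nonneg _)
    fun i => sup_le (le_abs_self _) (abs_nonneg _)
  obtain ⟨N, hNadd, hNi, hN⟩ := hpart (fun i => (y i)⁻) (fun i => negPart_nonneg _)
    fun i => sup_le (neg_le_abs _) (abs_nonneg _)
  refine ⟨P - N, fun A B hAB => ?_, fun i => ?_, fun A => abs_le'.2 ⟨?_, ?_⟩⟩
  · simp only [Pi.sub_apply, hPadd A B hAB, hNadd A B hAB]; abel
  · simp only [Pi.sub_apply, hPi, hNi, posPart_sub_negPart]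
  · exact (sub_le_self _ (hN A).1).trans (hP A).2
  · rw [Pi.sub_apply, neg_sub]; exact (sub_le_self _ (hP A).1).trans (hN A).2

end SigmaDedekindComplete

section Rosenthal

variable {α : Type*} {μ : Set α → ℝ}

lemma additive_empty (hμ : ∀ A B, Disjoint A B → μ (A ∪ B) = μ A + μ B) : μ ∅ = 0 := by
  simpa using hμ ∅ ∅ (Set.disjoint_empty ∅)

lemma additive_sUnion (hμ : ∀ A B, Disjoint A B → μ (A ∪ B) = μ A + μ B) (𝒢 : Finset (Set α))
    (h𝒢 : (𝒢 : Set (Set α)).PairwiseDisjoint id) : μ (⋃₀ 𝒢) = ∑ G ∈ 𝒢, μ G := by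
  classical
  induction 𝒢 using Finset.induction_on with
  | empty => simpa using additive_empty hμ
  | insert G 𝒢 hG ih =>
    rw [Finset.coe_insert, Set.pairwiseDisjoint_insert] at h𝒢
    rw [Finset.coe_insert, Set.sUnion_insert, Finset.sum_insert hG, ← ih h𝒢.1]
    exact hμ _ _ (Set.disjoint_sUnion_right.2 fun G' hG' =>
      h𝒢.2 G' hG' (ne_of_mem_of_not_mem hG' hG).symm)

lemma card_mul_le_of_additive (hμ : ∀ A B, Disjoint A B → μ (A ∪ B) = μ A + μ B) {C ε : ℝ}
    (hC : ∀ A, |μ A| ≤ C) (𝒢 : Finset (Set α)) (h𝒢 : (𝒢 : Set (Set α)).PairwiseDisjoint id)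
    (hε : ∀ G ∈ 𝒢, ε < |μ G|) : 𝒢.card * ε ≤ 2 * C := by
  classical
  have hsub : ∀ (p : Set α → Prop) [DecidablePred p],
      ∑ G ∈ 𝒢.filter p, μ G = μ (⋃₀ ↑(𝒢.filter p)) := fun p _ =>
    (additive_sUnion hμ _ (h𝒢.subset (Finset.coe_subset.2 (Finset.filter_subset p 𝒢)))).symm
  calc 𝒢.card * ε ≤ ∑ G ∈ 𝒢, |μ G| := by
        simpa using Finset.card_nsmul_le_sum 𝒢 _ ε fun G hG => (hε G hG).le
    _ = ∑ G ∈ 𝒢.filter (0 ≤ μ ·), μ G - ∑ G ∈ 𝒢.filter (¬ 0 ≤ μ ·), μ G := by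
        rw [← Finset.sum_filter_add_sum_filter_not 𝒢 (0 ≤ μ ·), sub_eq_add_neg,
          ← Finset.sum_neg_distrib]
        congr 1 <;> refine Finset.sum_congr rfl fun G hG => ?_
        · exact abs_of_nonneg (Finset.mem_filter.1 hG).2
        · exact abs_of_neg (not_le.1 (Finset.mem_filter.1 hG).2)
    _ ≤ C + C := by
        rw [hsub, hsub, sub_eq_add_neg]
        exact add_le_add (abs_le.1 (hC _)).2 (neg_le.1 (abs_le.1 (hC _)).1)
    _ = 2 * C := by ring

def HasDisjointLargeSets (μ : ℕ → Set ℕ → ℝ) (ε : ℝ) (r : ℕ) (φ : ℕ → ℕ) : Prop :=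
  ∀ a, ∃ 𝒢 : Finset (Set ℕ), 𝒢.card = r ∧ (𝒢 : Set (Set ℕ)).PairwiseDisjoint id ∧
    ∀ G ∈ 𝒢, Disjoint G (Set.range φ) ∧ ε < |μ (φ a) G|

/-- The large set found in the row `j ↦ φ (pair i j)` lies in `range φ`, which the sets
collected so far avoid. -/
lemma exists_hasDisjointLargeSets_succ {μ : ℕ → Set ℕ → ℝ} {ε : ℝ}
    (hμ : ∀ k A B, Disjoint A B → μ k (A ∪ B) = μ k A + μ k B) (hε : 0 < ε)
    (hbad : ∀ ψ : ℕ → ℕ, Function.Injective ψ →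
      ∃ a, ∃ B ⊆ Set.range ψ \ {ψ a}, ε < |μ (ψ a) B|)
    {r : ℕ} {φ : ℕ → ℕ} (hφ : Function.Injective φ) (h𝒢 : HasDisjointLargeSets μ ε r φ) :
    ∃ φ' : ℕ → ℕ, Function.Injective φ' ∧ HasDisjointLargeSets μ ε (r + 1) φ' := by
  classical
  choose a B hB hBμ using fun i => hbad (fun j => φ (Nat.pair i j))
    fun j j' h => (Nat.pair_eq_pair.1 (hφ h)).2
  have hBφ : ∀ i, B i ⊆ Set.range φ := fun i x hx => by
    obtain ⟨⟨j, rfl⟩, -⟩ := hB i hx; exact ⟨_, rfl⟩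
  have hran : Set.range (fun i => φ (Nat.pair i (a i))) ⊆ Set.range φ := by
    rintro _ ⟨i, rfl⟩; exact ⟨_, rfl⟩
  refine ⟨fun i => φ (Nat.pair i (a i)), fun i i' h => (Nat.pair_eq_pair.1 (hφ h)).1,
    fun i => ?_⟩
  obtain ⟨𝒢, rfl, hd, hG⟩ := h𝒢 (Nat.pair i (a i))
  have hBG : ∀ G ∈ 𝒢, Disjoint (B i) G := fun G hG' =>
    ((hG G hG').1.mono_right (hBφ i)).symm
  have hB𝒢 : B i ∉ 𝒢 := fun hmem => by
    have := hBμ i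
    rw [disjoint_self.1 (hBG _ hmem), Set.bot_eq_empty, additive_empty (hμ _), abs_zero] at this
    exact lt_asymm hε this
  refine ⟨insert (B i) 𝒢, Finset.card_insert_of_notMem hB𝒢, ?_, ?_⟩
  · rw [Finset.coe_insert, Set.pairwiseDisjoint_insert]
    exact ⟨hd, fun G hG' _ => hBG G hG'⟩
  · simp only [Finset.mem_insert, forall_eq_or_imp]
    refine ⟨⟨Set.disjoint_left.2 ?_, hBμ i⟩,
      fun G hG' => ⟨(hG G hG').1.mono_right hran, (hG G hG').2⟩⟩
    rintro x hx ⟨i', rfl⟩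
    obtain ⟨⟨j, hj⟩, hne⟩ := hB i hx
    obtain ⟨rfl, rfl⟩ := Nat.pair_eq_pair.1 (hφ hj)
    exact hne rfl

/-- Rosenthal's lemma. -/
theorem rosenthal {μ : ℕ → Set ℕ → ℝ} {C ε : ℝ}
    (hμ : ∀ k A B, Disjoint A B → μ k (A ∪ B) = μ k A + μ k B) (hC : ∀ k A, |μ k A| ≤ C)
    (hε : 0 < ε) :
    ∃ ψ : ℕ → ℕ, Function.Injective ψ ∧ ∀ a, ∀ B ⊆ Set.range ψ \ {ψ a}, |μ (ψ a) B| ≤ ε := by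
  by_contra! hbad
  have hP : ∀ r, ∃ φ, Function.Injective φ ∧ HasDisjointLargeSets μ ε r φ := fun r => by
    induction r with
    | zero => exact ⟨id, Function.injective_id, fun _ => ⟨∅, rfl, by simp, by simp⟩⟩
    | succ r ih =>
      obtain ⟨φ, hφ, h𝒢⟩ := ih
      exact exists_hasDisjointLargeSets_succ hμ hε hbad hφ h𝒢
  obtain ⟨r, hr⟩ := exists_nat_gt (2 * C / ε)
  obtain ⟨φ, -, h𝒢⟩ := hP r
  obtain ⟨𝒢, rfl, hd, hG⟩ := h𝒢 0
  have := card_mul_le_of_additive (hμ (φ 0)) (hC (φ 0)) 𝒢 hd fun G hG' => (hG G hG').2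
  rw [div_lt_iff₀ hε] at hr
  linarith

end Rosenthal

lemma WeakStarNull.exists_norm_le {E : Type*} [NormedAddCommGroup E] [NormedSpace ℝ E]
    [CompleteSpace E] {g : ℕ → E →L[ℝ] ℝ} (hg : WeakStarNull g) : ∃ M, ∀ n, ‖g n‖ ≤ M :=
  banach_steinhaus fun x => by
    obtain ⟨C, hC⟩ := (hg x).norm.bddAbove_range
    exact ⟨C, fun n => hC ⟨n, rfl⟩⟩

section DisjointFunctionals

variable {E : Type*} [NormedAddCommGroup E] [Lattice E] [IsOrderedAddMonoid E] [HasSolidNorm E]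
  [NormedSpace ℝ E]

lemma exists_isComponent_absVal_le (hσ : SigmaDedekindComplete E) {f g : E →L[ℝ] ℝ}
    (hfg : FunDisjoint f g) {v : E} (hv : 0 ≤ v) {δ : ℝ} (hδ : 0 < δ) :
    ∃ c, IsComponent v c ∧ absVal f c ≤ δ ∧ absVal g (v - c) ≤ δ := by
  obtain ⟨_, ⟨s, ⟨hs, hsv⟩, rfl⟩, hlt⟩ := exists_lt_of_csInf_lt
    (s := (fun y => absVal f y + absVal g (v - y)) '' {y | 0 ≤ y ∧ y ≤ v})
    ⟨_, 0, ⟨le_rfl, hv⟩, rfl⟩ ((hfg v hv).symm ▸ half_pos hδ)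
  obtain ⟨c, hc, hcs, hcv⟩ := exists_isComponent_le_two_nsmul hσ hs hsv
  have hf := absVal_mono f hc.nonneg hcs
  have hg := absVal_mono g hc.sub_nonneg hcv
  rw [absVal_two_nsmul f hs] at hf
  rw [absVal_two_nsmul g (sub_nonneg.2 hsv)] at hg
  have := absVal_nonneg f hs
  have := absVal_nonneg g (sub_nonneg.2 hsv)
  exact ⟨c, hc, by linarith, by linarith⟩

theorem exists_absVal_lt_of_pairwise_inf_eq_zero [CompleteSpace E] (hσ : SigmaDedekindComplete E)
    {g : ℕ → E →L[ℝ] ℝ} (hg : WeakStarNull g) {v : E} (hv : 0 ≤ v) {b : ℕ → E}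
    (hb : ∀ i, 0 ≤ b i) (hbv : ∀ i, b i ≤ v) (hbd : Pairwise fun i j => b i ⊓ b j = 0) {δ : ℝ}
    (hδ : 0 < δ) : ∃ i, absVal (g i) (b i) < δ := by
  by_contra! hbig
  obtain ⟨M, hM⟩ := hg.exists_norm_le
  choose y hyb hyg using fun i =>
    exists_lt_apply_of_lt_absVal (g i) (hb i) ((half_lt_self hδ).trans_le (hbig i))
  obtain ⟨z, hzadd, hzi, hzv⟩ := exists_additive_sum_of_abs_le hσ hv hbv hbd hyb
  obtain ⟨ψ, hψ, hψδ⟩ := rosenthal (μ := fun k A => g k (z A)) (C := M * ‖v‖) (ε := δ / 4)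
    (fun k A B hAB => by simp only [hzadd A B hAB, map_add])
    (fun k A => (abs_apply_le_absVal _ (hzv A)).trans <| (absVal_le_norm_mul_norm _ hv).trans <|
      mul_le_mul_of_nonneg_right (hM k) (norm_nonneg v))
    (by positivity)
  have hZ : ∀ a, δ / 4 ≤ g (ψ a) (z (Set.range ψ)) := fun a => by
    have hsplit : Set.range ψ = {ψ a} ∪ Set.range ψ \ {ψ a} :=
      (Set.union_sdiff_cancel (by simp)).symm
    rw [hsplit, hzadd _ _ Set.disjoint_sdiff_right, map_add, hzi]
    linarith [hyg (ψ a), neg_abs_le (g (ψ a) (z (Set.range ψ \ {ψ a}))), hψδ a _ subset_rfl]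
  obtain ⟨a, ha⟩ := (((hg (z (Set.range ψ))).comp hψ.nat_tendsto_atTop).eventually
    (gt_mem_nhds (by positivity : (0 : ℝ) < δ / 4))).exists
  exact (ha.trans_le (hZ a)).false

end DisjointFunctionals

section Humps

variable {E : Type*} [NormedAddCommGroup E] [Lattice E] [IsOrderedAddMonoid E] [HasSolidNorm E]
  [NormedSpace ℝ E] {g : ℕ → E →L[ℝ] ℝ} {v : E}

lemma exists_isComponent_chains (hσ : SigmaDedekindComplete E)
    (hg : Pairwise fun m n => FunDisjoint (g m) (g n)) (hv : 0 ≤ v) {γ : ℕ → ℝ}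
    (hγ : ∀ j, 0 < γ j) :
    ∃ d : ℕ → ℕ → E, (∀ j k, IsComponent v (d j k)) ∧ (∀ j, Antitone (d j)) ∧
      (∀ j k m, m < k → m ≠ j → absVal (g m) (d j k) ≤ γ j) ∧
      ∀ j k, absVal (g j) (v - d j k) ≤ γ j := by
  set tol : ℕ → ℕ → ℝ := fun j m => γ j / 2 * (1 / 2) ^ m
  have htol : ∀ j m, 0 < tol j m := fun j m => by have := hγ j; positivity
  have htolγ : ∀ j m, tol j m ≤ γ j := fun j m => by
    have := hγ j
    have : (1 / 2 : ℝ) ^ m ≤ 1 := pow_le_one₀ (by norm_num) (by norm_num)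
    simp only [tol]; nlinarith
  have hc : ∀ j m, ∃ c, IsComponent v c ∧ (m ≠ j → absVal (g m) c ≤ tol j m) ∧
      absVal (g j) (v - c) ≤ tol j m := fun j m => by
    by_cases hmj : m = j
    · exact ⟨v, isComponent_self hv, fun h => (h hmj).elim,
        by simpa [absVal_zero] using (htol j m).le⟩
    · obtain ⟨c, hc, hcm, hcj⟩ := exists_isComponent_absVal_le hσ (hg hmj) hv (htol j m)
      exact ⟨c, hc, fun _ => hcm, hcj⟩
  choose c hc hcm hcj using hc
  have hd : ∀ j k, IsComponent v (chainInf v (c j) k) := fun j => isComponent_chainInf hv (hc j)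
  refine ⟨fun j => chainInf v (c j), hd, fun j => antitone_chainInf, fun j k m hmk hmj => ?_,
    fun j k => ?_⟩
  · exact (absVal_mono _ (hd j k).nonneg (chainInf_le hmk)).trans
      ((hcm j m hmj).trans (htolγ j m))
  · calc absVal (g j) (v - chainInf v (c j) k)
        ≤ absVal (g j) (∑ m ∈ Finset.range k, (v - c j m)) :=
          absVal_mono _ (hd j k).sub_nonneg (sub_chainInf_le_sum (fun m => (hc j m).le) k)
      _ = ∑ m ∈ Finset.range k, absVal (g j) (v - c j m) :=
          absVal_sum _ (fun m => (hc j m).sub_nonneg) _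
      _ ≤ ∑ m ∈ Finset.range k, tol j m := Finset.sum_le_sum fun m _ => hcj j m
      _ ≤ γ j := by
          rw [← Finset.mul_sum]
          nlinarith [sum_geometric_two_le k, hγ j]

lemma exists_humps_of_escaping {d : ℕ → E} (hd : ∀ k, IsComponent v (d k)) (hanti : Antitone d)
    {j : ℕ} {γ : ℝ} (hsmall : ∀ k m, m < k → m ≠ j → absVal (g m) (d k) ≤ γ)
    (hesc : ∀ k, ∃ n ≠ j, 2 * γ < absVal (g n) (d k)) :
    ∃ nn : ℕ → ℕ, StrictMono nn ∧ ∃ b : ℕ → E, (∀ i, 0 ≤ b i ∧ b i ≤ v) ∧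
      (Pairwise fun i i' => b i ⊓ b i' = 0) ∧ ∀ i, γ ≤ absVal (g (nn i)) (b i) := by
  choose n hnj hn using hesc
  have hkn : ∀ k, k ≤ n k := fun k => by
    by_contra! h
    linarith [hn k, hsmall k (n k) h (hnj k), absVal_nonneg (g (n k)) (hd k).nonneg]
  set K : ℕ → ℕ := fun i => (fun k => n k + 1)^[i] 0
  have hK : ∀ i, K (i + 1) = n (K i) + 1 := fun i => Function.iterate_succ_apply' _ _ _
  have hnK : ∀ i, n (K i) < K (i + 1) := fun i => by rw [hK]; exact Nat.lt_succ_self _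
  have hKmono : StrictMono K := strictMono_nat_of_lt_succ fun i => (hkn _).trans_lt (hnK i)
  have hdK : Antitone (d ∘ K) := hanti.comp_monotone hKmono.monotone
  refine ⟨fun i => n (K i), strictMono_nat_of_lt_succ fun i => (hnK i).trans_le (hkn _),
    fun i => d (K i) - d (K (i + 1)), fun i => ⟨sub_nonneg.2 (hdK (Nat.le_succ i)),
      (sub_le_self _ (hd _).nonneg).trans (hd _).le⟩,
    pairwise_sub_succ_inf_eq_zero (fun i => hd (K i)) hdK, fun i => ?_⟩
  show γ ≤ absVal (g (n (K i))) (d (K i) - d (K (i + 1)))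
  rw [absVal_sub _ (hd _).nonneg (hanti (hKmono.monotone (Nat.le_succ i)))]
  linarith [hn (K i), hsmall (K (i + 1)) (n (K i)) (hnK i) (hnj _)]

lemma exists_humps (hσ : SigmaDedekindComplete E)
    (hg : Pairwise fun m n => FunDisjoint (g m) (g n)) (hv : 0 ≤ v) {ε : ℝ} (hε : 0 < ε)
    (hbig : ∀ n, ε ≤ absVal (g n) v) :
    ∃ nn : ℕ → ℕ, StrictMono nn ∧ ∃ b : ℕ → E, (∀ i, 0 ≤ b i ∧ b i ≤ v) ∧
      (Pairwise fun i i' => b i ⊓ b i' = 0) ∧ ∃ δ > 0, ∀ i, δ ≤ absVal (g (nn i)) (b i) := by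
  set γ : ℕ → ℝ := fun j => ε / 16 * (1 / 2) ^ j
  have hγ : ∀ j, 0 < γ j := fun j => by positivity
  obtain ⟨d, hd, hanti, hsmall, hret⟩ := exists_isComponent_chains hσ hg hv hγ
  by_cases hesc : ∃ j, ∀ k, ∃ n ≠ j, 2 * γ j < absVal (g n) (d j k)
  · obtain ⟨j, hj⟩ := hesc
    obtain ⟨nn, hnn, b, hb, hbd, hmass⟩ := exists_humps_of_escaping (hd j) (hanti j) (hsmall j) hj
    exact ⟨nn, hnn, b, hb, hbd, γ j, hγ j, hmass⟩
  push Not at hesc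
  choose k hk using hesc
  obtain ⟨w, hw, hwd, hwle⟩ := exists_pairwise_inf_eq_zero_isComponent hv fun j => hd j (k j)
  refine ⟨id, strictMono_id, w, fun j => ⟨(hw j).nonneg, (hw j).le⟩, hwd, ε / 2, by positivity,
    fun j => ?_⟩
  show ε / 2 ≤ absVal (g j) (w j)
  have hsum : ∑ i ∈ Finset.range j, absVal (g j) (d i (k i)) ≤ ε / 4 :=
    calc ∑ i ∈ Finset.range j, absVal (g j) (d i (k i))
        ≤ ∑ i ∈ Finset.range j, 2 * γ i :=
          Finset.sum_le_sum fun i hi => hk i j (Finset.mem_range.1 hi).ne'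
      _ = ε / 8 * ∑ i ∈ Finset.range j, (1 / 2 : ℝ) ^ i := by
          rw [Finset.mul_sum]; exact Finset.sum_congr rfl fun i _ => by ring
      _ ≤ ε / 4 := by nlinarith [sum_geometric_two_le j]
  have hrest : absVal (g j) (v - w j) ≤
      absVal (g j) (v - d j (k j)) + ∑ i ∈ Finset.range j, absVal (g j) (d i (k i)) := by
    rw [← absVal_sum _ (fun i => (hd i (k i)).nonneg), ← absVal_add _ (hd j (k j)).sub_nonneg
      (Finset.sum_nonneg fun i _ => (hd i (k i)).nonneg)]
    exact absVal_mono _ (hw j).sub_nonneg (hwle j)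
  have hsplit := absVal_add (g j) (hw j).nonneg (hw j).sub_nonneg
  rw [add_sub_cancel] at hsplit
  have : γ j ≤ ε / 16 :=
    mul_le_of_le_one_right (by positivity) (pow_le_one₀ (by norm_num) (by norm_num))
  linarith [hbig j, hret j (k j)]

theorem tendsto_absVal_of_weakStarNull [CompleteSpace E] (hσ : SigmaDedekindComplete E)
    {f : ℕ → E →L[ℝ] ℝ} (hdisj : Pairwise fun m n => FunDisjoint (f m) (f n))
    (hnull : WeakStarNull f) (hv : 0 ≤ v) : Tendsto (fun n => absVal (f n) v) atTop (𝓝 0) := by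
  refine tendsto_order.2 ⟨fun a ha => Eventually.of_forall fun n =>
    ha.trans_le (absVal_nonneg _ hv), fun ε hε => ?_⟩
  by_contra h
  obtain ⟨φ, hφ, hφε⟩ := extraction_of_frequently_atTop
    ((not_eventually.1 h).mono fun n hn => not_lt.1 hn)
  obtain ⟨nn, hnn, b, hb, hbd, δ, hδ, hmass⟩ :=
    exists_humps hσ (fun m n hmn => hdisj (hφ.injective.ne hmn)) hv hε hφε
  obtain ⟨i, hi⟩ := exists_absVal_lt_of_pairwise_inf_eq_zero hσ (g := fun i => f (φ (nn i)))
    (fun x => (hnull x).comp (hφ.comp hnn).tendsto_atTop) hv (fun i => (hb i).1)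
    (fun i => (hb i).2) hbd hδ
  exact absurd hi (not_lt.2 (hmass i))

end Humps

/-- In a σ-Dedekind complete Banach lattice, for a disjoint weak*-null sequence
`(f n)` in `E*`, the sequences `(|f n|)`, `(f n ⁺)` and `(f n ⁻)` are weak*-null. -/
theorem stmt1 {E : Type*} [NormedAddCommGroup E] [Lattice E] [IsOrderedAddMonoid E] [HasSolidNorm E] [NormedSpace ℝ E] [CompleteSpace E]
    (hσ : SigmaDedekindComplete E) (f : ℕ → E →L[ℝ] ℝ)
    (hdisj : Pairwise (fun m n => FunDisjoint (f m) (f n)))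
    (hnull : WeakStarNull f) :
    (∀ x : E, Tendsto (fun n => absValF (f n) x) atTop (𝓝 0)) ∧
    (∀ x : E, Tendsto (fun n => posValF (f n) x) atTop (𝓝 0)) ∧
    (∀ x : E, Tendsto (fun n => negValF (f n) x) atTop (𝓝 0)) := by
  have habs : ∀ v : E, 0 ≤ v → Tendsto (fun n => absVal (f n) v) atTop (𝓝 0) :=
    fun v hv => tendsto_absVal_of_weakStarNull hσ hdisj hnull hv
  have hparts : ∀ a : ℕ → E → ℝ, (∀ v : E, 0 ≤ v → Tendsto (fun n => a n v) atTop (𝓝 0)) →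
      ∀ x : E, Tendsto (fun n => a n (x ⊔ 0) - a n (-x ⊔ 0)) atTop (𝓝 0) := fun a ha x => by
    simpa using (ha _ le_sup_right).sub (ha _ le_sup_right)
  refine ⟨hparts _ habs,
    hparts (fun n => posVal (f n)) fun v hv => tendsto_posVal_of_tendsto_absVal hv (habs v hv),
    hparts (fun n => posVal (-f n)) fun v hv => tendsto_posVal_of_tendsto_absVal hv ?_⟩
  simpa only [absVal_neg] using habs v hv
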